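/- arXiv:math/0510648 — 2 statements merged into one kernel-verified Lean document; each statement's English description precedes it below -/
import Mathlib

section
/- Let f : ℕ → (0,∞) satisfy Σ_{n≥1} 1/f(n) < ∞, and let {X(i,j) : i ∈ {1,2}, j ∈ ℕ} be independent random variables with X(i,j) exponentially distributed with rate f(j). Then for any x, y ∈ ℕ, the random series Σ_{j≥x} X(1,j) and Σ_{j≥y} X(2,j) converge almost surely to finite values, and with probability 1 these two sums are not equal. -/
open MeasureTheory ProbabilityTheory Filter Real

/-- `X` is an exponential random variable with rate `l`:
`X ≥ 0` a.s. and `P(X > t) = exp (-l * t)` for all `t ≥ 0`. -/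
def IsExpRV {Ω : Type*} [MeasurableSpace Ω] (μ : Measure Ω) (l : ℝ) (X : Ω → ℝ) : Prop :=
  Measurable X ∧ (∀ᵐ ω ∂μ, 0 ≤ X ω) ∧
    ∀ t : ℝ, 0 ≤ t → μ {ω | t < X ω} = ENNReal.ofReal (Real.exp (-l * t))

/-!
Each series has expectation `∑ 1 / f j < ∞`, so it converges almost surely. Splitting off the
first term `X (0, x)`, the two sums agree exactly when `X (0, x) = V`, where `V` is built from
the other variables and is therefore independent of `X (0, x)`; as an exponential variable has
no atoms, this happens with probability zero.
-/

open scoped ENNReal Topology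

namespace IsExpRV

variable {Ω : Type*} [MeasurableSpace Ω] {μ : Measure Ω} {l : ℝ} {X : Ω → ℝ}

theorem lintegral_ofReal (hl : 0 < l) (h : IsExpRV μ l X) :
    ∫⁻ ω, ENNReal.ofReal (X ω) ∂μ = ENNReal.ofReal (1 / l) := by
  rw [lintegral_eq_lintegral_meas_lt μ h.2.1 h.1.aemeasurable,
    setLIntegral_congr_fun measurableSet_Ioi fun t ht => h.2.2 t (le_of_lt ht),
    ← ofReal_integral_eq_lintegral_ofReal (exp_neg_integrableOn_Ioi 0 hl)
      (ae_of_all _ fun t => (exp_pos _).le),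
    integral_exp_mul_Ioi (neg_lt_zero.mpr hl)]
  simp

theorem nullSingletonClass_map [IsProbabilityMeasure μ] (h : IsExpRV μ l X) :
    NullSingletonClass (μ.map X) := by
  refine ⟨fun c => ?_⟩
  rw [Measure.map_apply h.1 (measurableSet_singleton c)]
  have hmeas (t : ℝ) : MeasurableSet {ω | t < X ω} := measurableSet_lt measurable_const h.1
  rcases le_or_gt c 0 with hc | hc
  · have hpos : μ {ω | 0 < X ω} = 1 := by simpa using h.2.2 0 le_rfl
    refine measure_mono_null (fun ω (hω : X ω = c) => ?_)
      ((prob_compl_eq_zero_iff (hmeas 0)).mpr hpos)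
    simp [hω, hc]
  -- `μ {X = c} ≤ P(c - ε < X) - P(c < X)`, which tends to `0` with `ε` by continuity of the tail
  set g : ℝ → ℝ≥0∞ := fun ε => ENNReal.ofReal (exp (-l * (c - ε))) - ENNReal.ofReal (exp (-l * c))
  have hbound : ∀ ε ∈ Set.Ioo 0 c, μ (X ⁻¹' {c}) ≤ g ε := by
    rintro ε ⟨hε, hεc⟩
    have hsub : {ω | c < X ω} ⊆ {ω | c - ε < X ω} := fun ω (hω : c < X ω) =>
      show c - ε < X ω by linarith
    calc μ (X ⁻¹' {c}) ≤ μ ({ω | c - ε < X ω} \ {ω | c < X ω}) :=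
          measure_mono fun ω (hω : X ω = c) => by simp [hω, hε]
      _ = g ε := by
          rw [measure_sdiff hsub (hmeas c).nullMeasurableSet (measure_ne_top _ _),
            h.2.2 _ (by linarith), h.2.2 _ hc.le]
  have hg : Tendsto g (𝓝[>] 0) (𝓝 0) := by
    have hcont : Continuous g := (ENNReal.continuous_sub_right _).comp
      (ENNReal.continuous_ofReal.comp (by fun_prop))
    simpa [g] using (hcont.tendsto 0).mono_left nhdsWithin_le_nhds
  exact nonpos_iff_eq_zero.mp <| ge_of_tendsto hg <|
    eventually_of_mem (Ioo_mem_nhdsGT hc) hbound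

end IsExpRV

namespace ProbabilityTheory

variable {Ω : Type*} [MeasurableSpace Ω] {μ : Measure Ω}

theorem IndepFun.measure_eq_eq_zero {β : Type*} [MeasurableSpace β] [MeasurableEq β]
    [IsFiniteMeasure μ] {W V : Ω → β} (hW : Measurable W) (hV : Measurable V)
    (hWV : IndepFun W V μ) [NullSingletonClass (μ.map W)] : μ {ω | W ω = V ω} = 0 := by
  have hmap := (indepFun_iff_map_prod_eq_prod_map_map hW.aemeasurable hV.aemeasurable).mp hWV
  have hdiag : {ω | W ω = V ω} = (fun ω => (W ω, V ω)) ⁻¹' Set.diagonal β := rfl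
  rw [hdiag, ← Measure.map_apply (hW.prodMk hV) measurableSet_diagonal, hmap,
    Measure.prod_apply_symm measurableSet_diagonal]
  simp [Set.preimage, Set.diagonal]

theorem iIndepFun.indepFun_of_measurable_iSup {ι β γ : Type*} [mβ : MeasurableSpace β]
    [MeasurableSpace γ] {X : ι → Ω → β} (hX : ∀ i, Measurable (X i)) (hind : iIndepFun X μ)
    {i : ι} {S : Set ι} (hi : i ∉ S) {V : Ω → γ}
    (hV : Measurable[⨆ j ∈ S, mβ.comap (X j)] V) : IndepFun (X i) V μ := by
  have h := indep_iSup_of_disjoint (fun j => (hX j).comap_le) hind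
    (Set.disjoint_singleton_left.mpr hi)
  refine indep_of_indep_of_le_right (indep_of_indep_of_le_left h ?_) hV.comap_le
  exact le_biSup (f := fun j => mβ.comap (X j)) (Set.mem_singleton i)

theorem ae_summable_of_tsum_lintegral_ne_top {ι : Type*} [Countable ι] {Y : ι → Ω → ℝ}
    (hY : ∀ j, Measurable (Y j)) (hY0 : ∀ j, ∀ᵐ ω ∂μ, 0 ≤ Y j ω)
    (h : ∑' j, ∫⁻ ω, ENNReal.ofReal (Y j ω) ∂μ ≠ ∞) :
    ∀ᵐ ω ∂μ, Summable fun j => Y j ω := by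
  rw [← lintegral_tsum fun j => (hY j).ennreal_ofReal.aemeasurable] at h
  filter_upwards [ae_lt_top (Measurable.tsum fun j => (hY j).ennreal_ofReal) h,
    ae_all_iff.mpr hY0] with ω hfin hnonneg
  exact (ENNReal.summable_toReal hfin.ne).congr fun j => ENNReal.toReal_ofReal (hnonneg j)

theorem ae_summable_of_isExpRV {ι : Type*} [Countable ι] {Y : ι → Ω → ℝ} {l : ι → ℝ}
    (hY : ∀ j, IsExpRV μ (l j) (Y j)) (hl : ∀ j, 0 < l j) (hsum : Summable fun j => 1 / l j) :
    ∀ᵐ ω ∂μ, Summable fun j => Y j ω := by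
  refine ae_summable_of_tsum_lintegral_ne_top (fun j => (hY j).1) (fun j => (hY j).2.1) ?_
  simp_rw [fun j => (hY j).lintegral_ofReal (hl j)]
  rw [← ENNReal.ofReal_tsum_of_nonneg (fun j => (one_div_pos.mpr (hl j)).le) hsum]
  exact ENNReal.ofReal_ne_top

end ProbabilityTheory

/-- In the monopolistic regime (`∑ 1/f(n) < ∞`), the total arrival-time series
of both bins converge a.s. and are a.s. different. -/
theorem stmt5 {Ω : Type*} [MeasurableSpace Ω] (μ : Measure Ω) [IsProbabilityMeasure μ]
    (f : ℕ → ℝ) (hf : ∀ n, 0 < f n) (hsum : Summable (fun n => 1 / f n))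
    (X : Fin 2 × ℕ → Ω → ℝ)
    (hexp : ∀ p : Fin 2 × ℕ, IsExpRV μ (f p.2) (X p))
    (hindep : iIndepFun X μ)
    (x y : ℕ) :
    ∀ᵐ ω ∂μ, Summable (fun j : ℕ => X (0, x + j) ω) ∧
      Summable (fun j : ℕ => X (1, y + j) ω) ∧
      (∑' j : ℕ, X (0, x + j) ω) ≠ (∑' j : ℕ, X (1, y + j) ω) := by
  have hX : ∀ p, Measurable (X p) := fun p => (hexp p).1
  have hsummable (i : Fin 2) (z : ℕ) : ∀ᵐ ω ∂μ, Summable fun j => X (i, z + j) ω :=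
    ae_summable_of_isExpRV (fun j => hexp (i, z + j)) (fun j => hf _)
      (hsum.comp_injective (add_right_injective z))
  set V : Ω → ℝ := fun ω => ∑' j, X (1, y + j) ω - ∑' j, X (0, x + (j + 1)) ω
  have hV : Measurable[⨆ q ∈ ({(0, x)}ᶜ : Set (Fin 2 × ℕ)),
      MeasurableSpace.comap (X q) inferInstance] V := by
    let _ : MeasurableSpace Ω :=
      ⨆ q ∈ ({(0, x)}ᶜ : Set (Fin 2 × ℕ)), MeasurableSpace.comap (X q) inferInstance
    have hXp (p : Fin 2 × ℕ) (hp : p ≠ (0, x)) : Measurable (X p) :=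
      Measurable.of_comap_le (le_biSup (f := fun q => MeasurableSpace.comap (X q) _) hp)
    exact (Measurable.tsum fun j => hXp (1, y + j) (by simp)).sub
      (Measurable.tsum fun j => hXp (0, x + (j + 1)) (by simp))
  have hindV : IndepFun (X (0, x)) V μ :=
    hindep.indepFun_of_measurable_iSup hX (S := {(0, x)}ᶜ) (by simp) hV
  have hne : ∀ᵐ ω ∂μ, X (0, x) ω ≠ V ω := by
    have := (hexp (0, x)).nullSingletonClass_map
    have hdiag := hindV.measure_eq_eq_zero (hX _)
      (hV.mono (iSup₂_le fun q _ => (hX q).comap_le) le_rfl)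
    exact ae_iff.mpr (by simpa using hdiag)
  filter_upwards [hsummable 0 x, hsummable 1 y, hne] with ω h0 h1 hω
  refine ⟨h0, h1, fun heq => hω ?_⟩
  simp [V, ← heq, h0.tsum_eq_zero_add]
end

section
/- For a standard Brownian motion B on [0,1], the random variable max_{0≤s≤1} B(s) has the same distribution as |N| where N is a standard Gaussian; i.e., for all λ ≥ 0, P(max_{0≤s≤1} B(s) ≤ λ) = √(2/π) ∫_0^λ e^{−x²/2} dx. -/
/-!
Sampling `B` on the dyadic grid `j / 2^N` gives a random walk with independent symmetric
`N(0, 2^{-N})` steps whose endpoint `B 1` is standard Gaussian. Reflecting such a walk after its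
first passage above `l` preserves its law, which yields `P(max ≤ l) + 2 P(B 1 > l) ≥ 1`, and, for
`l < l'` and `δ > 0`, `P(max ≤ l) + P(B 1 > l') + P(B 1 > l' + 2δ) ≤ 1 + P(some step ≥ δ)`; the
error term is `O(2^N exp(-2^N δ² / 2))`. By path continuity `{max_{[0,1]} B ≤ l}` is a.s. the
decreasing limit of the grid events, so letting `N → ∞` and then `l' → l`, `δ → 0` gives
`P(max ≤ l) = 1 - 2 P(Z > l) = P(|Z| ≤ l)` for a standard Gaussian `Z`.
-/

open MeasureTheory ProbabilityTheory Filter Real Topology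

/-- `B` is a standard Brownian motion on `[0,1]` over the probability space `(Ω, μ)`:
it starts at `0`, has a.s. continuous paths on `[0,1]`, and for every finite
increasing sequence of times in `[0,1]` the increments are independent with
`B(t) - B(s) ~ N(0, t - s)`. -/
def IsStandardBM {Ω : Type*} [MeasurableSpace Ω] (B : ℝ → Ω → ℝ) (μ : Measure Ω) : Prop :=
  (∀ t : ℝ, Measurable (B t)) ∧
  (∀ᵐ ω ∂μ, B 0 ω = 0) ∧
  (∀ᵐ ω ∂μ, ContinuousOn (fun t => B t ω) (Set.Icc 0 1)) ∧
  (∀ (k : ℕ) (s : Fin (k + 1) → ℝ), StrictMono s → (∀ i, s i ∈ Set.Icc (0:ℝ) 1) →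
    iIndepFun
      (fun i : Fin k => fun ω => B (s i.succ) ω - B (s i.castSucc) ω) μ) ∧
  (∀ s t : ℝ, 0 ≤ s → s < t → t ≤ 1 →
    Measure.map (fun ω => B t ω - B s ω) μ
      = gaussianReal 0 (Real.toNNReal (t - s)))

open scoped ENNReal NNReal

namespace MeasureTheory

lemma measure_eq_tsum_inter_preimage_singleton {α : Type*} [MeasurableSpace α] (μ : Measure α)
    {f : α → ℕ} (hf : Measurable f) {S : Set α} (hS : MeasurableSet S) :
    μ S = ∑' j, μ (S ∩ f ⁻¹' {j}) := by
  have hcover : (⋃ j, f ⁻¹' {j}) = Set.univ := by ext; simp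
  have h := Measure.restrict_iUnion_apply (μ := μ)
    (pairwise_disjoint_fiber f) (fun j => hf (measurableSet_singleton j)) hS
  rw [hcover, Measure.restrict_univ] at h
  simpa only [Measure.restrict_apply hS] using h

lemma tendsto_measure_Ioi_add_div (ν : Measure ℝ) (a : ℝ) {c : ℝ} (hc : 0 < c) :
    Tendsto (fun k : ℕ => ν (Set.Ioi (a + c / (k + 1)))) atTop (𝓝 (ν (Set.Ioi a))) := by
  have hmono : Monotone fun k : ℕ => Set.Ioi (a + c / (k + 1)) :=
    fun i j hij => Set.Ioi_subset_Ioi (by gcongr)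
  have hunion : ⋃ k : ℕ, Set.Ioi (a + c / (k + 1)) = Set.Ioi a := by
    ext x
    simp only [Set.mem_iUnion, Set.mem_Ioi]
    constructor
    · rintro ⟨k, hk⟩
      linarith [show 0 < c / (k + 1) by positivity]
    · intro hx
      obtain ⟨k, hk⟩ := exists_nat_one_div_lt (div_pos (sub_pos.2 hx) hc)
      refine ⟨k, ?_⟩
      rw [lt_div_iff₀ hc] at hk
      linarith [show c / (k + 1) = 1 / (k + 1) * c by ring]
  simpa only [hunion, Function.comp_def] using tendsto_measure_iUnion_atTop hmono

end MeasureTheory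

namespace ProbabilityTheory

instance (v : ℝ≥0) : (gaussianReal 0 v).IsNegInvariant :=
  ⟨(gaussianReal_map_neg (μ := 0) (v := v)).trans (by rw [neg_zero])⟩

lemma hasSubgaussianMGF_id_gaussianReal (v : ℝ≥0) : HasSubgaussianMGF id v (gaussianReal 0 v) :=
  ⟨integrable_exp_mul_gaussianReal, fun t => by simp [mgf_id_gaussianReal]⟩

lemma gaussianReal_Ici_le_exp (v : ℝ≥0) {δ : ℝ} (hδ : 0 ≤ δ) :
    gaussianReal 0 v (Set.Ici δ) ≤ ENNReal.ofReal (rexp (-δ ^ 2 / (2 * v))) := by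
  rw [← ofReal_measureReal]
  exact ENNReal.ofReal_le_ofReal ((hasSubgaussianMGF_id_gaussianReal v).measure_ge_le hδ)

lemma gaussianReal_Icc_add_two_mul_Ioi (v : ℝ≥0) {l : ℝ} (hl : 0 ≤ l) :
    gaussianReal 0 v (Set.Icc (-l) l) + 2 * gaussianReal 0 v (Set.Ioi l) = 1 := by
  have hneg : gaussianReal 0 v (Set.Iio (-l)) = gaussianReal 0 v (Set.Ioi l) := by
    rw [← Set.neg_Ioi, Measure.measure_neg]
  have hdisj : Disjoint (Set.Iio (-l)) (Set.Ioi l) :=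
    Set.disjoint_left.2 fun x h1 h2 => by simp only [Set.mem_Iio, Set.mem_Ioi] at h1 h2; linarith
  have hcompl : (Set.Icc (-l) l)ᶜ = Set.Iio (-l) ∪ Set.Ioi l := by
    ext x
    simp only [Set.mem_compl_iff, Set.mem_Icc, Set.mem_union, Set.mem_Iio, Set.mem_Ioi, not_and_or,
      not_le]
  rw [← measure_univ (μ := gaussianReal 0 v), ← measure_add_measure_compl measurableSet_Icc,
    hcompl, measure_union hdisj measurableSet_Ioi, hneg, two_mul]

lemma integral_gaussianPDFReal_neg_self (l : ℝ) :
    ∫ x in (-l)..l, gaussianPDFReal 0 1 x = √(2 / π) * ∫ x in (0 : ℝ)..l, rexp (-x ^ 2 / 2) := by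
  have hpdf : gaussianPDFReal 0 1 = fun x => (√(2 * π))⁻¹ * rexp (-x ^ 2 / 2) := by
    ext x; simp [gaussianPDFReal]
  have hcont : Continuous fun x : ℝ => rexp (-x ^ 2 / 2) := by fun_prop
  have heven : ∫ x in (-l)..0, rexp (-x ^ 2 / 2) = ∫ x in (0 : ℝ)..l, rexp (-x ^ 2 / 2) := by
    have h := intervalIntegral.integral_comp_neg (a := 0) (b := l) fun x => rexp (-x ^ 2 / 2)
    simp only [neg_sq, neg_zero] at h
    exact h.symm
  have hconst : (√(2 * π))⁻¹ * 2 = √(2 / π) := by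
    rw [show 2 / π = 2 ^ 2 / (2 * π) by ring, Real.sqrt_div' _ (by positivity),
      Real.sqrt_sq zero_le_two]
    ring
  rw [hpdf, intervalIntegral.integral_const_mul, ← intervalIntegral.integral_add_adjacent_intervals
    (hcont.intervalIntegrable _ 0) (hcont.intervalIntegrable 0 _), heven, ← hconst]
  ring

lemma gaussianReal_Icc_neg_self {l : ℝ} (hl : 0 ≤ l) :
    gaussianReal 0 1 (Set.Icc (-l) l)
      = ENNReal.ofReal (√(2 / π) * ∫ x in (0 : ℝ)..l, rexp (-x ^ 2 / 2)) := by
  rw [gaussianReal_apply_eq_integral 0 one_ne_zero, integral_Icc_eq_integral_Ioc,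
    ← intervalIntegral.integral_of_le (by linarith), integral_gaussianPDFReal_neg_self l]

lemma tendsto_two_pow_mul_gaussianReal_Ici {δ : ℝ} (hδ : 0 < δ) :
    Tendsto (fun N : ℕ => (2 ^ N : ℝ≥0∞) * gaussianReal 0 (2 ^ N)⁻¹ (Set.Ici δ)) atTop (𝓝 0) := by
  have hreal : Tendsto (fun N : ℕ => (2 : ℝ) ^ N * rexp (-(δ ^ 2 / 2) * 2 ^ N)) atTop (𝓝 0) := by
    have h := (tendsto_rpow_mul_exp_neg_mul_atTop_nhds_zero 1 (δ ^ 2 / 2) (by positivity)).comp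
      (tendsto_pow_atTop_atTop_of_one_lt one_lt_two)
    simpa only [Function.comp_def, Real.rpow_one] using h
  have hbound (N : ℕ) : (2 ^ N : ℝ≥0∞) * gaussianReal 0 (2 ^ N)⁻¹ (Set.Ici δ)
      ≤ ENNReal.ofReal ((2 : ℝ) ^ N * rexp (-(δ ^ 2 / 2) * 2 ^ N)) := by
    rw [ENNReal.ofReal_mul (by positivity), ENNReal.ofReal_pow zero_le_two, ENNReal.ofReal_ofNat]
    gcongr
    refine (gaussianReal_Ici_le_exp _ hδ.le).trans_eq (congrArg _ (congrArg _ ?_))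
    push_cast
    field_simp
  refine tendsto_of_tendsto_of_tendsto_of_le_of_le tendsto_const_nhds ?_ (fun _ => bot_le) hbound
  simpa using ENNReal.tendsto_ofReal hreal

end ProbabilityTheory

namespace RandomWalk

variable {n : ℕ}

/-- Steps are extended by `0` beyond the horizon `n`, so `position x j = position x n` for
`j ≥ n`. -/
def step (x : Fin n → ℝ) (i : ℕ) : ℝ := if h : i < n then x ⟨i, h⟩ else 0

def position (x : Fin n → ℝ) (j : ℕ) : ℝ := ∑ i ∈ Finset.range j, step x i

lemma step_of_lt (x : Fin n → ℝ) {i : ℕ} (h : i < n) : step x i = x ⟨i, h⟩ := dif_pos h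

lemma position_zero (x : Fin n → ℝ) : position x 0 = 0 := Finset.sum_range_zero _

lemma position_succ (x : Fin n → ℝ) (j : ℕ) : position x (j + 1) = position x j + step x j :=
  Finset.sum_range_succ _ _

lemma measurable_step (i : ℕ) : Measurable fun x : Fin n → ℝ => step x i := by
  unfold step; split_ifs <;> fun_prop

lemma measurable_position (j : ℕ) : Measurable fun x : Fin n → ℝ => position x j :=
  Finset.measurable_sum _ fun i _ => measurable_step i

def flipFrom (j : ℕ) (x : Fin n → ℝ) : Fin n → ℝ := fun i => if (i : ℕ) < j then x i else -x i

@[simp] lemma flipFrom_flipFrom (j : ℕ) (x : Fin n → ℝ) : flipFrom j (flipFrom j x) = x := by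
  funext i; unfold flipFrom; split_ifs <;> simp

lemma step_flipFrom (j : ℕ) (x : Fin n → ℝ) (i : ℕ) :
    step (flipFrom j x) i = if i < j then step x i else -step x i := by
  unfold step flipFrom; split_ifs <;> simp_all

lemma position_flipFrom_of_le {j m : ℕ} (h : m ≤ j) (x : Fin n → ℝ) :
    position (flipFrom j x) m = position x m :=
  Finset.sum_congr rfl fun i hi => by
    rw [step_flipFrom, if_pos ((Finset.mem_range.1 hi).trans_le h)]

lemma position_flipFrom_of_ge {j m : ℕ} (h : j ≤ m) (x : Fin n → ℝ) :
    position (flipFrom j x) m = 2 * position x j - position x m := by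
  have hIco : ∑ i ∈ Finset.Ico j m, step (flipFrom j x) i = -∑ i ∈ Finset.Ico j m, step x i := by
    rw [← Finset.sum_neg_distrib]
    exact Finset.sum_congr rfl fun i hi => by
      rw [step_flipFrom, if_neg (Finset.mem_Ico.1 hi).1.not_gt]
  have hsplit (y : Fin n → ℝ) :
      position y m = position y j + ∑ i ∈ Finset.Ico j m, step y i :=
    (Finset.sum_range_add_sum_Ico _ h).symm
  rw [hsplit, hsplit x, hIco, position_flipFrom_of_le le_rfl]
  ring

lemma exists_lt_or_le_position (l : ℝ) (x : Fin n → ℝ) : ∃ j, n < j ∨ l ≤ position x j :=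
  ⟨n + 1, .inl n.lt_succ_self⟩

open Classical in
/-- The first `j` with `l ≤ position x j`, or `n + 1` if the walk stays below `l` up to `n`. -/
noncomputable def hitIndex (l : ℝ) (x : Fin n → ℝ) : ℕ :=
  Nat.find (exists_lt_or_le_position l x)

section HitIndex

variable {l : ℝ} {x : Fin n → ℝ} {j : ℕ}

lemma hitIndex_spec (l : ℝ) (x : Fin n → ℝ) :
    n < hitIndex l x ∨ l ≤ position x (hitIndex l x) := by
  unfold hitIndex
  exact Nat.find_spec (exists_lt_or_le_position l x)

lemma hitIndex_le (h : n < j ∨ l ≤ position x j) : hitIndex l x ≤ j := by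
  unfold hitIndex
  exact Nat.find_min' _ h

lemma hitIndex_le_of_le_position (h : l ≤ position x j) : hitIndex l x ≤ j :=
  hitIndex_le (.inr h)

lemma position_lt_of_lt_hitIndex (h : j < hitIndex l x) : position x j < l :=
  not_le.1 fun h' => h.not_ge (hitIndex_le_of_le_position h')

lemma le_position_hitIndex (h : hitIndex l x ≤ n) : l ≤ position x (hitIndex l x) :=
  (hitIndex_spec l x).resolve_left h.not_gt

lemma hitIndex_congr {y : Fin n → ℝ} (h : ∀ m ≤ hitIndex l x, position y m = position x m) :
    hitIndex l y = hitIndex l x := by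
  refine le_antisymm (hitIndex_le ?_) (le_of_not_gt fun hlt => (hitIndex_le ?_).not_gt hlt)
  · rw [h _ le_rfl]; exact hitIndex_spec l x
  · rw [← h _ hlt.le]; exact hitIndex_spec l y

lemma measurable_hitIndex (l : ℝ) : Measurable (hitIndex (n := n) l) := by
  classical
  exact measurable_find (exists_lt_or_le_position l) fun j =>
    (MeasurableSet.const (n < j)).union (measurableSet_le measurable_const (measurable_position j))

end HitIndex

noncomputable def reflect (l : ℝ) (x : Fin n → ℝ) : Fin n → ℝ := flipFrom (hitIndex l x) x

lemma hitIndex_reflect (l : ℝ) (x : Fin n → ℝ) : hitIndex l (reflect l x) = hitIndex l x :=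
  hitIndex_congr fun _ hm => position_flipFrom_of_le hm x

lemma position_reflect {l : ℝ} {x : Fin n → ℝ} {m : ℕ} (h : hitIndex l x ≤ m) :
    position (reflect l x) m = 2 * position x (hitIndex l x) - position x m :=
  position_flipFrom_of_ge h x

lemma measurable_reflect (l : ℝ) : Measurable (reflect (n := n) l) :=
  measurable_pi_lambda _ fun i =>
    Measurable.ite (measurable_hitIndex l measurableSet_Ioi) (measurable_pi_apply i)
      (measurable_pi_apply i).neg

lemma reflect_preimage_inter_hitIndex_fiber (l : ℝ) (A : Set (Fin n → ℝ)) (j : ℕ) :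
    reflect l ⁻¹' A ∩ hitIndex l ⁻¹' {j} = flipFrom j ⁻¹' (A ∩ hitIndex l ⁻¹' {j}) := by
  ext x
  simp only [Set.mem_inter_iff, Set.mem_preimage, Set.mem_singleton_iff]
  constructor
  · rintro ⟨hA, rfl⟩
    exact ⟨hA, hitIndex_reflect l x⟩
  · rintro ⟨hA, hj⟩
    have hx : hitIndex l x = j := by
      have h := hitIndex_reflect l (flipFrom j x)
      rwa [reflect, hj, flipFrom_flipFrom] at h
    exact ⟨by rwa [reflect, hx], hx⟩

section Reflection

variable (ν : Fin n → Measure ℝ) [∀ i, SigmaFinite (ν i)] [∀ i, (ν i).IsNegInvariant]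

lemma measurePreserving_flipFrom (j : ℕ) :
    MeasurePreserving (flipFrom j) (Measure.pi ν) (Measure.pi ν) := by
  refine measurePreserving_pi ν ν (f := fun i y => if (i : ℕ) < j then y else -y) fun i => ?_
  split_ifs
  · exact MeasurePreserving.id _
  · exact Measure.measurePreserving_neg _

/-- `reflect l` maps each fibre `{hitIndex l = j}` to itself, and acts on it as the
measure-preserving `flipFrom j`. -/
theorem measurePreserving_reflect (l : ℝ) :
    MeasurePreserving (reflect l) (Measure.pi ν) (Measure.pi ν) := by
  refine ⟨measurable_reflect l, Measure.ext fun A hA => ?_⟩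
  rw [Measure.map_apply (measurable_reflect l) hA,
    measure_eq_tsum_inter_preimage_singleton _ (measurable_hitIndex l) (measurable_reflect l hA),
    measure_eq_tsum_inter_preimage_singleton _ (measurable_hitIndex l) hA]
  refine tsum_congr fun j => ?_
  rw [reflect_preimage_inter_hitIndex_fiber]
  exact (measurePreserving_flipFrom ν j).measure_preimage
    (hA.inter (measurable_hitIndex l (measurableSet_singleton j))).nullMeasurableSet

end Reflection

def stayBelow (l : ℝ) : Set (Fin n → ℝ) := {x | ∀ j ≤ n, position x j ≤ l}

def bigStep (δ : ℝ) : Set (Fin n → ℝ) := {x | ∃ i, δ ≤ x i}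

lemma measurableSet_stayBelow (l : ℝ) : MeasurableSet (stayBelow (n := n) l) := by
  simp only [stayBelow, Set.ofPred_forall]
  exact .iInter fun j => .iInter fun _ => measurableSet_le (measurable_position j) measurable_const

section Deterministic

variable {l δ : ℝ} {x : Fin n → ℝ}

lemma lt_position_reflect (hx : x ∉ stayBelow l) (hn : position x n < l) :
    l < position (reflect l x) n := by
  simp only [stayBelow, Set.mem_ofPred_eq, not_forall, not_le] at hx
  obtain ⟨j, hj, hlj⟩ := hx
  have hτ : hitIndex l x ≤ n := (hitIndex_le_of_le_position hlj.le).trans hj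
  rw [position_reflect hτ]
  linarith [le_position_hitIndex hτ]

lemma position_hitIndex_lt (hl : 0 ≤ l) (hδ : 0 < δ) (hx : x ∉ bigStep δ)
    (hτ : hitIndex l x ≤ n) : position x (hitIndex l x) < l + δ := by
  simp only [bigStep, Set.mem_ofPred_eq, not_exists, not_le] at hx
  cases h : hitIndex l x with
  | zero => rw [position_zero]; linarith
  | succ m =>
    have hm : m < n := by omega
    rw [position_succ, step_of_lt x hm]
    linarith [position_lt_of_lt_hitIndex (l := l) (x := x) (j := m) (by omega), hx ⟨m, hm⟩]

lemma position_reflect_lt (hl : 0 ≤ l) (hδ : 0 < δ) (hx : x ∉ bigStep δ)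
    (hn : l + 2 * δ < position x n) : position (reflect l x) n < l := by
  have hτ : hitIndex l x ≤ n := hitIndex_le_of_le_position (by linarith)
  rw [position_reflect hτ]
  linarith [position_hitIndex_lt hl hδ hx hτ]

end Deterministic

variable (ν : Fin n → Measure ℝ) [∀ i, IsProbabilityMeasure (ν i)]

lemma measure_bigStep_le (δ : ℝ) : Measure.pi ν (bigStep δ) ≤ ∑ i, ν i (Set.Ici δ) := by
  have hunion : bigStep (n := n) δ = ⋃ i, Function.eval i ⁻¹' Set.Ici δ := by ext; simp [bigStep]
  rw [hunion]
  refine (measure_iUnion_fintype_le _ _).trans_eq (Finset.sum_congr rfl fun i _ => ?_)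
  exact (measurePreserving_eval ν i).measure_preimage measurableSet_Ici.nullMeasurableSet

variable [∀ i, (ν i).IsNegInvariant]

theorem one_le_measure_stayBelow_add (l : ℝ) :
    1 ≤ Measure.pi ν (stayBelow l) + (Measure.pi ν).map (position · n) (Set.Ioi l)
      + (Measure.pi ν).map (position · n) (Set.Ici l) := by
  set P := Measure.pi ν
  rw [Measure.map_apply (measurable_position n) measurableSet_Ioi,
    Measure.map_apply (measurable_position n) measurableSet_Ici]
  have hcover : (Set.univ : Set (Fin n → ℝ)) ⊆
      stayBelow l ∪ reflect l ⁻¹' {x | l < position x n} ∪ {x | l ≤ position x n} := by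
    intro x _
    by_cases hK : x ∈ stayBelow l
    · exact .inl (.inl hK)
    rcases lt_or_ge (position x n) l with h | h
    · exact .inl (.inr (lt_position_reflect hK h))
    · exact .inr h
  calc 1 = P Set.univ := measure_univ.symm
    _ ≤ P (stayBelow l) + P (reflect l ⁻¹' {x | l < position x n})
        + P {x | l ≤ position x n} :=
      (measure_mono hcover).trans <|
        (measure_union_le _ _).trans (by gcongr; exact measure_union_le _ _)
    _ = _ := by
      rw [(measurePreserving_reflect ν l).measure_preimage
        (measurableSet_lt measurable_const (measurable_position n)).nullMeasurableSet]
      rfl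

theorem measure_stayBelow_add_le {l l' δ : ℝ} (hll' : l < l') (hl' : 0 ≤ l') (hδ : 0 < δ) :
    Measure.pi ν (stayBelow l) + (Measure.pi ν).map (position · n) (Set.Ioi l')
      + (Measure.pi ν).map (position · n) (Set.Ioi (l' + 2 * δ))
      ≤ 1 + Measure.pi ν (bigStep δ) := by
  set P := Measure.pi ν
  rw [Measure.map_apply (measurable_position n) measurableSet_Ioi,
    Measure.map_apply (measurable_position n) measurableSet_Ioi]
  set A : Set (Fin n → ℝ) := {x | hitIndex l' x ≤ n ∧ position x n < l'}
  have hA : MeasurableSet A :=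
    (measurable_hitIndex l' measurableSet_Iic).inter
      (measurableSet_lt (measurable_position n) measurable_const)
  have hC : MeasurableSet {x : Fin n → ℝ | l' < position x n} :=
    measurableSet_lt measurable_const (measurable_position n)
  have hKA : Disjoint (stayBelow l) A := Set.disjoint_left.2 fun x hK hxA =>
    (hK _ hxA.1).not_gt (hll'.trans_le (le_position_hitIndex hxA.1))
  have hKC : Disjoint (stayBelow l ∪ A) {x | l' < position x n} :=
    Set.disjoint_left.2 fun x hx hxC => hx.elim
      (fun hK => (hK n le_rfl).not_gt (hll'.trans hxC)) (fun hxA => hxA.2.not_gt hxC)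
  have hdisjoint : P (stayBelow l) + P A + P {x | l' < position x n} ≤ 1 := by
    rw [← measure_union hKA hA, ← measure_union hKC hC]
    exact prob_le_one
  -- unless the walk overshoots `l'` by `δ` at its first passage, reflection sends a path ending
  -- above `l' + 2δ` to one that has hit `l'` and ends below it
  have hreflect : {x | l' + 2 * δ < position x n} ⊆ reflect l' ⁻¹' A ∪ bigStep δ := by
    intro x hx
    by_cases hbig : x ∈ bigStep δ
    · exact .inr hbig
    have hn : l' + 2 * δ < position x n := hx
    exact .inl ⟨(hitIndex_reflect l' x).trans_le (hitIndex_le_of_le_position (by linarith)),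
      position_reflect_lt hl' hδ hbig hn⟩
  have hlarge : P {x | l' + 2 * δ < position x n} ≤ P A + P (bigStep δ) := by
    rw [← (measurePreserving_reflect ν l').measure_preimage hA.nullMeasurableSet]
    exact (measure_mono hreflect).trans (measure_union_le _ _)
  calc P (stayBelow l) + P {x | l' < position x n} + P {x | l' + 2 * δ < position x n}
      ≤ P (stayBelow l) + P {x | l' < position x n} + (P A + P (bigStep δ)) := by gcongr
    _ = P (stayBelow l) + P A + P {x | l' < position x n} + P (bigStep δ) := by ring
    _ ≤ 1 + P (bigStep δ) := by gcongr

end RandomWalk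

lemma natCast_div_two_pow_mem_Icc {N j : ℕ} (hj : j ≤ 2 ^ N) : (j / 2 ^ N : ℝ) ∈ Set.Icc 0 1 :=
  ⟨by positivity, div_le_one_of_le₀ (by exact_mod_cast hj) (by positivity)⟩

lemma sSup_image_Icc_le_iff_dyadic {f : ℝ → ℝ} (hf : ContinuousOn f (Set.Icc 0 1)) (l : ℝ) :
    sSup (f '' Set.Icc 0 1) ≤ l ↔ ∀ N j : ℕ, j ≤ 2 ^ N → f (j / 2 ^ N) ≤ l := by
  rw [csSup_le_iff (isCompact_Icc.image_of_continuousOn hf).bddAbove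
    ((Set.nonempty_Icc.2 zero_le_one).image f), Set.forall_mem_image]
  refine ⟨fun h N j hj => h (natCast_div_two_pow_mem_Icc hj), fun h t ht => ?_⟩
  have hfloor (N : ℕ) : ⌊t * 2 ^ N⌋₊ ≤ 2 ^ N := by
    refine Nat.floor_le_of_le ?_
    push_cast
    nlinarith [ht.2, pow_pos (two_pos : (0 : ℝ) < 2) N]
  have hgrid : Tendsto (fun N : ℕ => (⌊t * 2 ^ N⌋₊ : ℝ) / 2 ^ N) atTop (𝓝[Set.Icc 0 1] t) :=
    tendsto_nhdsWithin_iff.2 ⟨(tendsto_nat_floor_mul_div_atTop ht.1).comp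
      (tendsto_pow_atTop_atTop_of_one_lt one_lt_two),
      .of_forall fun N => natCast_div_two_pow_mem_Icc (hfloor N)⟩
  exact le_of_tendsto ((hf t ht).tendsto.comp hgrid) (.of_forall fun N => h N _ (hfloor N))

namespace IsStandardBM

open RandomWalk

variable {Ω : Type*} {B : ℝ → Ω → ℝ}

noncomputable def dyadicIncrements (B : ℝ → Ω → ℝ) (N : ℕ) (ω : Ω) : Fin (2 ^ N) → ℝ :=
  fun i => B (((i : ℕ) + 1) / 2 ^ N) ω - B ((i : ℕ) / 2 ^ N) ω

def dyadicGridLE (B : ℝ → Ω → ℝ) (l : ℝ) (N : ℕ) : Set Ω :=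
  {ω | ∀ j : ℕ, j ≤ 2 ^ N → B (j / 2 ^ N) ω ≤ l}

lemma position_dyadicIncrements (N : ℕ) (ω : Ω) {j : ℕ} (hj : j ≤ 2 ^ N) :
    position (dyadicIncrements B N ω) j = B (j / 2 ^ N) ω - B 0 ω := by
  have hsteps : ∀ i ∈ Finset.range j, step (dyadicIncrements B N ω) i
      = B ((i + 1 : ℕ) / 2 ^ N) ω - B (i / 2 ^ N) ω := fun i hi => by
    rw [step_of_lt _ ((Finset.mem_range.1 hi).trans_le hj), dyadicIncrements, Nat.cast_succ]
  rw [position, Finset.sum_congr rfl hsteps,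
    Finset.sum_range_sub (fun i : ℕ => B (i / 2 ^ N) ω), Nat.cast_zero, zero_div]

lemma antitone_dyadicGridLE (l : ℝ) : Antitone (dyadicGridLE B l) := by
  refine antitone_nat_of_succ_le fun N ω hω j hj => ?_
  have h := hω (2 * j) (by rw [pow_succ]; omega)
  rwa [Nat.cast_mul, Nat.cast_two, pow_succ, mul_comm _ (2 : ℝ), mul_div_mul_left _ _ two_ne_zero]
    at h

variable [MeasurableSpace Ω] {μ : Measure Ω}

lemma measurable_dyadicIncrements (hB : ∀ t, Measurable (B t)) (N : ℕ) :
    Measurable (dyadicIncrements B N) :=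
  measurable_pi_lambda _ fun _ => (hB _).sub (hB _)

lemma iIndepFun_dyadicIncrements (hB : IsStandardBM B μ) (N : ℕ) :
    iIndepFun (fun i ω => dyadicIncrements B N ω i) μ := by
  have hmono : StrictMono fun j : Fin (2 ^ N + 1) => ((j : ℕ) : ℝ) / 2 ^ N :=
    fun a b hab => div_lt_div_of_pos_right (by exact_mod_cast hab) (by positivity)
  have h := hB.2.2.2.1 (2 ^ N) _ hmono fun j =>
    natCast_div_two_pow_mem_Icc (Nat.lt_succ_iff.1 j.isLt)
  convert h using 3 with i ω
  simp [dyadicIncrements]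

lemma map_dyadicIncrement (hB : IsStandardBM B μ) (N : ℕ) (i : Fin (2 ^ N)) :
    μ.map (fun ω => dyadicIncrements B N ω i) = gaussianReal 0 (2 ^ N)⁻¹ := by
  have hi : (i : ℕ) + 1 ≤ 2 ^ N := i.isLt
  have h := hB.2.2.2.2 _ _ (natCast_div_two_pow_mem_Icc i.isLt.le).1
    (div_lt_div_of_pos_right (lt_add_one _) (by positivity))
    (by exact_mod_cast (natCast_div_two_pow_mem_Icc hi).2)
  have hv : (((i : ℕ) + 1 : ℝ) / 2 ^ N - (i : ℕ) / 2 ^ N).toNNReal = (2 ^ N)⁻¹ := by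
    rw [← sub_div, add_sub_cancel_left, one_div, Real.toNNReal_inv, Real.toNNReal_pow,
      Real.toNNReal_ofNat]
    exact zero_le_two
  rwa [hv] at h

lemma map_dyadicIncrements (hB : IsStandardBM B μ) (N : ℕ) :
    μ.map (dyadicIncrements B N) = Measure.pi fun _ => gaussianReal 0 (2 ^ N)⁻¹ := by
  have h := (iIndepFun_dyadicIncrements hB N).map_fun_eq_pi_map
    fun i => (measurable_pi_iff.1 (measurable_dyadicIncrements hB.1 N) i).aemeasurable
  simp_rw [map_dyadicIncrement hB N] at h
  exact h

lemma measurableSet_dyadicGridLE (hB : ∀ t, Measurable (B t)) (l : ℝ) (N : ℕ) :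
    MeasurableSet (dyadicGridLE B l N) := by
  simp only [dyadicGridLE, Set.ofPred_forall]
  exact .iInter fun j => .iInter fun _ => measurableSet_le (hB _) measurable_const

lemma measure_dyadicGridLE (hB : IsStandardBM B μ) (l : ℝ) (N : ℕ) :
    μ (dyadicGridLE B l N)
      = Measure.pi (fun _ => gaussianReal 0 (2 ^ N)⁻¹) (stayBelow (n := 2 ^ N) l) := by
  have hae : dyadicGridLE B l N =ᵐ[μ] dyadicIncrements B N ⁻¹' stayBelow l := by
    filter_upwards [hB.2.1] with ω h0
    change (∀ j : ℕ, j ≤ 2 ^ N → _) = ∀ j ≤ 2 ^ N, position (dyadicIncrements B N ω) j ≤ l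
    exact propext (forall₂_congr fun j hj => by rw [position_dyadicIncrements N ω hj, h0, sub_zero])
  rw [measure_congr hae, ← map_dyadicIncrements hB N,
    Measure.map_apply (measurable_dyadicIncrements hB.1 N) (measurableSet_stayBelow l)]

lemma map_position_dyadicIncrements (hB : IsStandardBM B μ) (N : ℕ) :
    (Measure.pi fun _ : Fin (2 ^ N) => gaussianReal 0 (2 ^ N)⁻¹).map (fun x => position x (2 ^ N))
      = gaussianReal 0 1 := by
  have hend : (fun x => position x (2 ^ N)) ∘ dyadicIncrements B N = fun ω => B 1 ω - B 0 ω := by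
    ext ω
    rw [Function.comp_apply, position_dyadicIncrements N ω le_rfl, Nat.cast_pow, Nat.cast_ofNat,
      div_self (by positivity)]
  rw [← map_dyadicIncrements hB N, Measure.map_map (measurable_position _)
    (measurable_dyadicIncrements hB.1 N), hend, hB.2.2.2.2 0 1 le_rfl one_pos le_rfl]
  simp

lemma one_le_measure_dyadicGridLE_add (hB : IsStandardBM B μ) (l : ℝ) (N : ℕ) :
    1 ≤ μ (dyadicGridLE B l N) + 2 * gaussianReal 0 1 (Set.Ioi l) := by
  have : NullSingletonClass (gaussianReal 0 1) := nullSingletonClass_gaussianReal one_ne_zero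
  have h := one_le_measure_stayBelow_add (fun _ : Fin (2 ^ N) => gaussianReal 0 (2 ^ N)⁻¹) l
  rwa [map_position_dyadicIncrements hB N, ← measure_congr Ioi_ae_eq_Ici,
    ← measure_dyadicGridLE hB, add_assoc, ← two_mul] at h

lemma measure_dyadicGridLE_add_le (hB : IsStandardBM B μ) {l l' δ : ℝ} (hll' : l < l')
    (hl' : 0 ≤ l') (hδ : 0 < δ) (N : ℕ) :
    μ (dyadicGridLE B l N) + gaussianReal 0 1 (Set.Ioi l') + gaussianReal 0 1 (Set.Ioi (l' + 2 * δ))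
      ≤ 1 + 2 ^ N * gaussianReal 0 (2 ^ N)⁻¹ (Set.Ici δ) := by
  have h := measure_stayBelow_add_le (fun _ : Fin (2 ^ N) => gaussianReal 0 (2 ^ N)⁻¹) hll' hl' hδ
  rw [map_position_dyadicIncrements hB N, ← measure_dyadicGridLE hB] at h
  exact h.trans (by gcongr; exact (measure_bigStep_le _ δ).trans_eq (by simp))

theorem measure_iInter_dyadicGridLE_add [IsProbabilityMeasure μ] (hB : IsStandardBM B μ) {l : ℝ}
    (hl : 0 ≤ l) :
    μ (⋂ N, dyadicGridLE B l N) + 2 * gaussianReal 0 1 (Set.Ioi l) = 1 := by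
  set L := μ (⋂ N, dyadicGridLE B l N)
  have hlim : Tendsto (fun N => μ (dyadicGridLE B l N)) atTop (𝓝 L) :=
    tendsto_measure_iInter_atTop (fun N => (measurableSet_dyadicGridLE hB.1 l N).nullMeasurableSet)
      (antitone_dyadicGridLE l) ⟨0, measure_ne_top _ _⟩
  have hshifted (k : ℕ) : L + gaussianReal 0 1 (Set.Ioi (l + 1 / (k + 1)))
      + gaussianReal 0 1 (Set.Ioi (l + 3 / (k + 1))) ≤ 1 := by
    have hε : (0 : ℝ) < 1 / (k + 1) := by positivity
    have herr := (tendsto_two_pow_mul_gaussianReal_Ici hε).const_add 1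
    rw [add_zero] at herr
    refine ge_of_tendsto' herr fun N => le_trans ?_
      (measure_dyadicGridLE_add_le hB (lt_add_of_pos_right l hε) (by positivity) hε N)
    rw [show l + 1 / (k + 1) + 2 * (1 / (k + 1)) = l + 3 / (k + 1) by ring]
    gcongr
    exact measure_mono (Set.iInter_subset _ N)
  have htails : Tendsto (fun k : ℕ => L + gaussianReal 0 1 (Set.Ioi (l + 1 / (k + 1)))
      + gaussianReal 0 1 (Set.Ioi (l + 3 / (k + 1)))) atTop
      (𝓝 (L + 2 * gaussianReal 0 1 (Set.Ioi l))) := by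
    rw [two_mul, ← add_assoc]
    exact ((tendsto_measure_Ioi_add_div _ l one_pos).const_add L).add
      (tendsto_measure_Ioi_add_div _ l three_pos)
  exact le_antisymm (le_of_tendsto' htails hshifted)
    (ge_of_tendsto' (hlim.add_const _) (one_le_measure_dyadicGridLE_add hB l))

end IsStandardBM

/-- The running maximum of Brownian motion on `[0,1]` is distributed as `|N|`
for a standard Gaussian `N`: for all `λ ≥ 0`,
`P(max_{0≤s≤1} B(s) ≤ λ) = √(2/π) ∫_0^λ e^{-x²/2} dx`. -/
theorem stmt9 {Ω : Type*} [MeasurableSpace Ω] (μ : Measure Ω) [IsProbabilityMeasure μ]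
    (B : ℝ → Ω → ℝ) (hB : IsStandardBM B μ) (l : ℝ) (hl : 0 ≤ l) :
    μ {ω | sSup ((fun s => B s ω) '' Set.Icc 0 1) ≤ l}
      = ENNReal.ofReal (Real.sqrt (2 / π) * ∫ x in (0:ℝ)..l, Real.exp (-x ^ 2 / 2)) := by
  have hae : {ω | sSup ((fun s => B s ω) '' Set.Icc 0 1) ≤ l}
      =ᵐ[μ] ⋂ N, IsStandardBM.dyadicGridLE B l N := by
    rw [Filter.eventuallyEq_set]
    filter_upwards [hB.2.2.1] with ω hω
    exact (sSup_image_Icc_le_iff_dyadic hω l).trans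
      (Set.mem_iInter (s := IsStandardBM.dyadicGridLE B l)).symm
  have hsplit := hB.measure_iInter_dyadicGridLE_add hl
  rw [measure_congr hae, ← gaussianReal_Icc_neg_self hl]
  refine (ENNReal.add_left_inj (a := 2 * gaussianReal 0 1 (Set.Ioi l)) (by finiteness)).1 ?_
  rw [hsplit, gaussianReal_Icc_add_two_mul_Ioi 1 hl]
end
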